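/- For all integers n, m ≥ 1, the domination polynomial of the n×m rook graph satisfies D_{R_{n,m}}(x) = ((1+x)^n − 1)^m + Σ_{c=0}^{m−1} C(m,c) Σ_{k=0}^{c} (−1)^{c−k} C(c,k) ((1+x)^k − 1)^n as an identity in the polynomial ring ℤ[x]. -/

import Mathlib

/-!
A set of squares dominates the rook graph iff it meets every row or every column. Sets meeting
every column contribute `((1 + x) ^ n - 1) ^ m`: each column independently carries a nonempty
set of squares. The remaining dominating sets meet every row but not every column. Grouping them
by their set `C` of occupied columns, the sets meeting every row inside a column set `D`
contribute `((1 + x) ^ #D - 1) ^ n`, and Möbius inversion over the subsets `D ⊆ C` isolates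
those occupying exactly the columns `C`.
-/

open Finset Polynomial

/-- The `n × m` rook graph: vertices are squares `(a,b)`; two distinct squares are
adjacent iff they share a row or a column. -/
def rookGraph (n m : ℕ) : SimpleGraph (Fin n × Fin m) where
  Adj v w := v ≠ w ∧ (v.1 = w.1 ∨ v.2 = w.2)
  symm := by
    constructor
    rintro v w ⟨h1, h2⟩
    exact ⟨h1.symm, h2.imp Eq.symm Eq.symm⟩
  loopless := by
    constructor
    rintro v ⟨h1, _⟩
    exact h1 rfl

/-- `S` is a dominating set of the `n × m` rook graph. -/
def IsDomSet (n m : ℕ) (S : Finset (Fin n × Fin m)) : Prop :=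
  ∀ v, v ∈ S ∨ ∃ u ∈ S, (rookGraph n m).Adj u v

/-- `domCount n m k` is the number of dominating sets of cardinality `k`
of the `n × m` rook graph. -/
noncomputable def domCount (n m k : ℕ) : ℕ :=
  Set.ncard {S : Finset (Fin n × Fin m) | S.card = k ∧ IsDomSet n m S}

/-- `ECount n m k` is the number of `k`-element subsets of `{1,…,n} × {1,…,m}`
that meet every row and every column. -/
noncomputable def ECount (n m k : ℕ) : ℕ :=
  Set.ncard {T : Finset (Fin n × Fin m) | T.card = k ∧
    (∀ r : Fin n, ∃ c : Fin m, (r, c) ∈ T) ∧ (∀ c : Fin m, ∃ r : Fin n, (r, c) ∈ T)}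

/-- The domination polynomial of the `n × m` rook graph, as a polynomial over `ℤ`. -/
noncomputable def domPoly (n m : ℕ) : Polynomial ℤ :=
  ∑ k ∈ Finset.range (n * m + 1), Polynomial.C (domCount n m k : ℤ) * Polynomial.X ^ k

namespace Finset

variable {ι R : Type*} [CommRing R] [DecidableEq ι]

theorem sum_powerset_erase_empty_pow_card (s : Finset ι) (x : R) :
    ∑ t ∈ s.powerset.erase ∅, x ^ #t = (1 + x) ^ #s - 1 := by
  rw [eq_sub_iff_add_eq, add_comm 1 x, ← sum_pow_mul_eq_add_pow,
    ← sum_erase_add _ _ (empty_mem_powerset s)]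
  simp

theorem sum_powerset_filter_subset_neg_one_pow_card_sdiff {s u : Finset ι} (hus : u ⊆ s) :
    ∑ t ∈ s.powerset with u ⊆ t, (-1 : R) ^ #(s \ t) = if u = s then 1 else 0 := by
  have hreindex : ∑ t ∈ s.powerset with u ⊆ t, (-1 : R) ^ #(s \ t)
      = ∑ w ∈ (s \ u).powerset, (-1 : R) ^ #w :=
    sum_nbij' (s \ ·) (s \ ·)
      (fun t ht => by simp_all [sdiff_subset_sdiff])
      (fun w hw => by simp_all [subset_sdiff, disjoint_comm])
      (fun t ht => by simp_all)
      (fun w hw => sdiff_sdiff_eq_self ((mem_powerset.1 hw).trans sdiff_subset))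
      (fun _ _ => rfl)
  have hsum := congrArg (Int.cast : ℤ → R) (sum_powerset_neg_one_pow_card (x := s \ u))
  push_cast at hsum
  have hsu : s ⊆ u ↔ u = s := ⟨subset_antisymm hus, fun h => h ▸ subset_rfl⟩
  simp only [hreindex, hsum, sdiff_eq_empty_iff_subset, hsu]

theorem moebius_inversion_powerset (f g : Finset ι → R) (h : ∀ t, g t = ∑ u ∈ t.powerset, f u)
    (s : Finset ι) : f s = ∑ t ∈ s.powerset, (-1) ^ #(s \ t) * g t := by
  simp_rw [h, mul_sum]
  rw [sum_comm' (t' := s.powerset) (s' := fun u => {t ∈ s.powerset | u ⊆ t})]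
  · simp_rw [← sum_mul]
    rw [sum_congr rfl fun u hu => by
      rw [sum_powerset_filter_subset_neg_one_pow_card_sdiff (mem_powerset.1 hu)]]
    simp
  · intro t u
    simp only [mem_powerset, mem_filter]
    exact ⟨fun ⟨hts, hut⟩ => ⟨⟨hts, hut⟩, hut.trans hts⟩, fun ⟨⟨hts, hut⟩, _⟩ => ⟨hts, hut⟩⟩

end Finset

section ProdSubsets
variable {α β R : Type*} [Fintype α] [Fintype β] [DecidableEq α] [DecidableEq β] [CommRing R]

def finsetProdEquivPi : Finset (α × β) ≃ (α → Finset β) where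
  toFun S a := {b | (a, b) ∈ S}
  invFun g := {p | p.2 ∈ g p.1}
  left_inv S := by ext; simp
  right_inv g := by funext a; ext; simp

theorem card_finsetProdEquivPi_symm (g : α → Finset β) :
    #(finsetProdEquivPi.symm g) = ∑ a, #(g a) := by
  simp only [finsetProdEquivPi, Equiv.coe_fn_symm_mk, card_filter, Fintype.sum_prod_type]
  simp

theorem image_fst_finsetProdEquivPi_symm_eq_univ_iff (g : α → Finset β) :
    (finsetProdEquivPi.symm g).image Prod.fst = univ ↔ ∀ a, (g a).Nonempty := by
  simp [finsetProdEquivPi, eq_univ_iff_forall, Finset.Nonempty]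

theorem image_snd_finsetProdEquivPi_symm_subset_iff (g : α → Finset β) (D : Finset β) :
    (finsetProdEquivPi.symm g).image Prod.snd ⊆ D ↔ ∀ a, g a ⊆ D := by
  rw [image_subset_iff]
  simp [finsetProdEquivPi, subset_iff]

theorem sum_pow_card_image_fst_eq_univ_image_snd_subset (D : Finset β) (x : R) :
    ∑ S : Finset (α × β) with S.image Prod.fst = univ ∧ S.image Prod.snd ⊆ D, x ^ #S
      = ((1 + x) ^ #D - 1) ^ Fintype.card α := by
  rw [← sum_powerset_erase_empty_pow_card, ← card_univ, ← prod_const, ← sum_prod_piFinset]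
  symm
  refine sum_equiv finsetProdEquivPi.symm (fun g => ?_) (fun g _ => ?_)
  · simp [image_fst_finsetProdEquivPi_symm_eq_univ_iff, image_snd_finsetProdEquivPi_symm_subset_iff,
      forall_and, nonempty_iff_ne_empty]
  · rw [prod_pow_eq_pow_sum, card_finsetProdEquivPi_symm]

theorem sum_pow_card_image_snd_eq_univ (x : R) :
    ∑ S : Finset (α × β) with S.image Prod.snd = univ, x ^ #S
      = ((1 + x) ^ Fintype.card α - 1) ^ Fintype.card β := by
  have h := sum_pow_card_image_fst_eq_univ_image_snd_subset (α := β) (β := α) univ x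
  simp only [subset_univ, and_true, card_univ] at h
  rw [← h]
  refine sum_equiv (Equiv.prodComm α β).finsetCongr (fun S => ?_) (fun S _ => ?_)
  · simp only [mem_filter, mem_univ, true_and, Equiv.finsetCongr_apply, map_eq_image, image_image]
    rfl
  · simp

theorem sum_pow_card_image_fst_eq_univ_image_snd_eq (C : Finset β) (x : R) :
    ∑ S : Finset (α × β) with S.image Prod.fst = univ ∧ S.image Prod.snd = C, x ^ #S
      = ∑ k ∈ range (#C + 1),
          (-1) ^ (#C - k) * ((#C).choose k : R) * ((1 + x) ^ k - 1) ^ Fintype.card α := by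
  have hfib : ∀ D : Finset β, ((1 + x) ^ #D - 1) ^ Fintype.card α = ∑ C ∈ D.powerset,
      ∑ S : Finset (α × β) with S.image Prod.fst = univ ∧ S.image Prod.snd = C, x ^ #S := by
    intro D
    rw [← sum_pow_card_image_fst_eq_univ_image_snd_subset,
      ← sum_fiberwise_of_maps_to (g := fun S => S.image Prod.snd) (t := D.powerset) (by simp)]
    refine sum_congr rfl fun C hC => ?_
    rw [filter_filter]
    refine sum_congr (filter_congr fun S _ => ?_) fun _ _ => rfl
    constructor
    · rintro ⟨⟨hrows, -⟩, rfl⟩; exact ⟨hrows, rfl⟩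
    · rintro ⟨hrows, rfl⟩; exact ⟨⟨hrows, mem_powerset.1 hC⟩, rfl⟩
  rw [moebius_inversion_powerset _ _ hfib C]
  trans ∑ t ∈ C.powerset, (-1 : R) ^ (#C - #t) * ((1 + x) ^ #t - 1) ^ Fintype.card α
  · exact sum_congr rfl fun t ht => by rw [card_sdiff_of_subset (mem_powerset.1 ht)]
  rw [sum_powerset_apply_card (fun k => (-1 : R) ^ (#C - k) * ((1 + x) ^ k - 1) ^ Fintype.card α)]
  simp only [nsmul_eq_mul, mul_left_comm, mul_assoc]

theorem sum_erase_univ_apply_card (f : ℕ → R) :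
    ∑ C ∈ (univ : Finset (Finset β)).erase univ, f #C
      = ∑ c ∈ range (Fintype.card β), ((Fintype.card β).choose c : R) * f c := by
  have h := sum_powerset_apply_card f (x := (univ : Finset β))
  rw [powerset_univ, ← sum_erase_add _ _ (mem_univ univ), card_univ, sum_range_succ,
    Nat.choose_self, one_smul] at h
  simpa only [nsmul_eq_mul] using add_right_cancel h

theorem sum_pow_card_image_fst_eq_univ_image_snd_ne_univ (x : R) :
    ∑ S : Finset (α × β) with S.image Prod.fst = univ ∧ S.image Prod.snd ≠ univ, x ^ #S
      = ∑ c ∈ range (Fintype.card β), ((Fintype.card β).choose c : R) *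
          ∑ k ∈ range (c + 1),
            (-1) ^ (c - k) * (c.choose k : R) * ((1 + x) ^ k - 1) ^ Fintype.card α := by
  rw [← sum_erase_univ_apply_card, ← sum_fiberwise_of_maps_to (g := fun S => S.image Prod.snd)
    (t := (univ : Finset (Finset β)).erase univ) (by simp)]
  refine sum_congr rfl fun C hC => ?_
  rw [← sum_pow_card_image_fst_eq_univ_image_snd_eq, filter_filter]
  refine sum_congr (filter_congr fun S _ => ?_) fun _ _ => rfl
  constructor
  · rintro ⟨⟨hrows, -⟩, rfl⟩; exact ⟨hrows, rfl⟩
  · rintro ⟨hrows, rfl⟩; exact ⟨⟨hrows, ne_of_mem_erase hC⟩, rfl⟩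

end ProdSubsets

theorem isDomSet_iff_forall_exists (n m : ℕ) (S : Finset (Fin n × Fin m)) :
    IsDomSet n m S ↔ ∀ v : Fin n × Fin m, ∃ u ∈ S, u.1 = v.1 ∨ u.2 = v.2 := by
  refine forall_congr' fun v => ⟨?_, fun ⟨u, hu, hline⟩ => ?_⟩
  · rintro (hv | ⟨u, hu, -, hline⟩)
    · exact ⟨v, hv, .inl rfl⟩
    · exact ⟨u, hu, hline⟩
  · by_cases huv : u = v
    · exact .inl (huv ▸ hu)
    · exact .inr ⟨u, hu, huv, hline⟩

theorem isDomSet_iff (n m : ℕ) (S : Finset (Fin n × Fin m)) :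
    IsDomSet n m S ↔ S.image Prod.fst = univ ∨ S.image Prod.snd = univ := by
  simp only [isDomSet_iff_forall_exists, eq_univ_iff_forall, mem_image]
  refine ⟨fun h => ?_, ?_⟩
  · by_contra! hmiss
    obtain ⟨⟨r, hr⟩, ⟨c, hc⟩⟩ := hmiss
    obtain ⟨u, hu, hrow | hcol⟩ := h (r, c)
    · exact hr u hu hrow
    · exact hc u hu hcol
  · rintro (hrows | hcols) v
    · obtain ⟨u, hu, hrow⟩ := hrows v.1
      exact ⟨u, hu, .inl hrow⟩
    · obtain ⟨u, hu, hcol⟩ := hcols v.2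
      exact ⟨u, hu, .inr hcol⟩

open scoped Classical in
theorem domPoly_eq_sum_pow_card (n m : ℕ) :
    domPoly n m = ∑ S : Finset (Fin n × Fin m) with IsDomSet n m S, X ^ #S := by
  have hcard : ∀ S ∈ ({S | IsDomSet n m S} : Finset (Finset (Fin n × Fin m))),
      #S ∈ range (n * m + 1) := fun S _ => by
    simpa [Nat.lt_succ_iff] using card_le_univ S
  rw [domPoly, ← sum_fiberwise_of_maps_to hcard]
  refine sum_congr rfl fun k _ => ?_
  rw [sum_congr rfl fun S hS => by rw [(mem_filter.1 hS).2], sum_const, nsmul_eq_mul, domCount,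
    Set.ncard_eq_toFinset_card', map_natCast]
  congr 3
  ext S
  simp [and_comm]

open scoped Classical in
theorem sum_pow_card_isDomSet {R : Type*} [CommRing R] (n m : ℕ) (x : R) :
    ∑ S : Finset (Fin n × Fin m) with IsDomSet n m S, x ^ #S
      = ∑ S : Finset (Fin n × Fin m) with S.image Prod.snd = univ, x ^ #S
        + ∑ S : Finset (Fin n × Fin m) with S.image Prod.fst = univ ∧ S.image Prod.snd ≠ univ,
            x ^ #S := by
  rw [← sum_filter_add_sum_filter_not _ (fun S => S.image Prod.snd = univ), filter_filter,
    filter_filter]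
  congr 2 <;> ext S <;> simp only [isDomSet_iff, mem_filter] <;> tauto

theorem rook_domination_polynomial_form11_general (n m : ℕ) :
    domPoly n m =
      ((1 + Polynomial.X) ^ n - 1) ^ m +
        ∑ c ∈ Finset.range m,
          Polynomial.C (m.choose c : ℤ) *
            ∑ k ∈ Finset.range (c + 1),
              (-1 : Polynomial ℤ) ^ (c - k) * Polynomial.C (c.choose k : ℤ) *
                ((1 + Polynomial.X) ^ k - 1) ^ n := by
  rw [domPoly_eq_sum_pow_card, sum_pow_card_isDomSet, sum_pow_card_image_snd_eq_univ,
    sum_pow_card_image_fst_eq_univ_image_snd_ne_univ]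
  simp only [Fintype.card_fin, map_natCast]

/-- Intermediate form (eq. (11) in the paper) of the domination polynomial. -/
theorem rook_domination_polynomial_form11 (n m : ℕ) (hn : 1 ≤ n) (hm : 1 ≤ m) :
    domPoly n m =
      ((1 + Polynomial.X) ^ n - 1) ^ m +
        ∑ c ∈ Finset.range m,
          Polynomial.C (m.choose c : ℤ) *
            ∑ k ∈ Finset.range (c + 1),
              (-1 : Polynomial ℤ) ^ (c - k) * Polynomial.C (c.choose k : ℤ) *
                ((1 + Polynomial.X) ^ k - 1) ^ n :=
  rook_domination_polynomial_form11_general n m
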